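/- Let H∈(1/2,1), γ∈(0,2H−1), and a_H = H(2H−1). Then for 0≤s<t<τ, E[(z^{1,τ}_{ts})^2] := a_H ∫_s^t ∫_s^t (τ−r)^{−γ}(τ−l)^{−γ}|r−l|^{2H−2} dr dl ≤ C · min( (τ−t)^{−2γ}(t−s)^{2H}, (t−s)^{2H−2γ} ), where C depends only on H and γ. -/

import Mathlib

/-!
The kernel `K(r, l) = (τ - r)^{-γ} (τ - l)^{-γ} |r - l|^{2H-2}` is bounded pointwise on `[s, t]²`
in two ways, each of which integrates by elementary power integrals.

Away from `τ`, both factors `(τ - ·)^{-γ}` are at most `(τ - t)^{-γ}`, which leaves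
`∬ |r - l|^{2H-2} ≲ (t - s)^{2H}`.

Uniformly in `τ`, the factor of the point farther from `τ` is at most `|r - l|^{-γ}` and the other
one at most its distance to `t` to the power `-γ`. This costs `γ` of the diagonal singularity, which
stays integrable because `γ < 2H - 1`. For `l > r` the resulting `(t - l)^{-γ} (l - r)^{2H-2-γ}` is
split according to which of the gaps `t - l`, `l - r` is at least `(t - r)/2`, which avoids a Beta
integral.
-/

open MeasureTheory Real Set intervalIntegral

theorem intervalIntegral.integral_mono_of_nonneg_of_le_Ioo {f g : ℝ → ℝ} {a b : ℝ}
    (hab : a ≤ b) (hg : IntervalIntegrable g volume a b) (hf : ∀ x ∈ Ioo a b, 0 ≤ f x)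
    (h : ∀ x ∈ Ioo a b, f x ≤ g x) : ∫ x in a..b, f x ≤ ∫ x in a..b, g x := by
  simp only [integral_of_le hab, integral_Ioc_eq_integral_Ioo]
  exact integral_mono_of_nonneg (ae_restrict_of_forall_mem measurableSet_Ioo hf)
    (hg.1.mono_set Ioo_subset_Ioc_self) (ae_restrict_of_forall_mem measurableSet_Ioo h)

theorem le_max_mul_min {a b c x y : ℝ} (hx : 0 ≤ x) (hy : 0 ≤ y) (hb : a ≤ b * x)
    (hc : a ≤ c * y) : a ≤ max b c * min x y := by
  rcases le_total x y with h | h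
  · rw [min_eq_left h]
    exact hb.trans (mul_le_mul_of_nonneg_right (le_max_left _ _) hx)
  · rw [min_eq_right h]
    exact hc.trans (mul_le_mul_of_nonneg_right (le_max_right _ _) hy)

/-- Whichever of `a`, `b` is at least `(a + b) / 2` can be replaced by `(a + b) / 2`. -/
theorem rpow_mul_rpow_le_of_nonpos {a b x y : ℝ} (ha : 0 ≤ a) (hb : 0 ≤ b) (hab : 0 < a + b)
    (hx : x ≤ 0) (hy : y ≤ 0) :
    a ^ x * b ^ y ≤ 2 ^ (-x) * (a + b) ^ x * b ^ y + 2 ^ (-y) * (a + b) ^ y * a ^ x := by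
  have half_rpow : ∀ z : ℝ, ((a + b) / 2) ^ z = 2 ^ (-z) * (a + b) ^ z := fun z => by
    rw [div_rpow hab.le zero_le_two, rpow_neg zero_le_two, div_eq_mul_inv, mul_comm]
  rw [← half_rpow, ← half_rpow]
  have hm : 0 < (a + b) / 2 := half_pos hab
  have hax : 0 ≤ a ^ x := rpow_nonneg ha x
  have hby : 0 ≤ b ^ y := rpow_nonneg hb y
  rcases le_total ((a + b) / 2) a with h | h
  · calc a ^ x * b ^ y ≤ ((a + b) / 2) ^ x * b ^ y :=
          mul_le_mul_of_nonneg_right (rpow_le_rpow_of_nonpos hm h hx) hby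
      _ ≤ _ := le_add_of_nonneg_right (mul_nonneg (rpow_nonneg hm.le y) hax)
  · have hb' : (a + b) / 2 ≤ b := by linarith
    calc a ^ x * b ^ y ≤ ((a + b) / 2) ^ y * a ^ x := by
          rw [mul_comm]
          exact mul_le_mul_of_nonneg_right (rpow_le_rpow_of_nonpos hm hb' hy) hax
      _ ≤ _ := le_add_of_nonneg_left (mul_nonneg (rpow_nonneg hm.le x) hby)

section PowerIntegrals

variable {p s r t : ℝ}

theorem abs_sub_rpow_eqOn_left : EqOn (fun l => |r - l| ^ p) (fun l => (r - l) ^ p) (Iic r) :=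
  fun l (hl : l ≤ r) => by simp only [abs_of_nonneg (sub_nonneg.2 hl)]

theorem abs_sub_rpow_eqOn_right : EqOn (fun l => |r - l| ^ p) (fun l => (l - r) ^ p) (Ici r) :=
  fun l (hl : r ≤ l) => by simp only [abs_sub_comm r l, abs_of_nonneg (sub_nonneg.2 hl)]

variable (hp : -1 < p)
include hp

theorem intervalIntegrable_const_sub_rpow (c a b : ℝ) :
    IntervalIntegrable (fun l => (c - l) ^ p) volume a b := by
  simpa using (intervalIntegrable_rpow' (a := c - a) (b := c - b) hp).comp_sub_left c

theorem intervalIntegrable_sub_const_rpow (c a b : ℝ) :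
    IntervalIntegrable (fun l => (l - c) ^ p) volume a b := by
  simpa using (intervalIntegrable_rpow' (a := a - c) (b := b - c) hp).comp_sub_right c

theorem integral_const_sub_rpow (a c : ℝ) :
    ∫ l in a..c, (c - l) ^ p = (c - a) ^ (p + 1) / (p + 1) := by
  rw [integral_comp_sub_left (fun x => x ^ p) c, sub_self, integral_rpow (Or.inl hp),
    zero_rpow (by linarith : p + 1 ≠ 0), sub_zero]

theorem integral_sub_const_rpow (c b : ℝ) :
    ∫ l in c..b, (l - c) ^ p = (b - c) ^ (p + 1) / (p + 1) := by
  rw [integral_comp_sub_right (fun x => x ^ p) c, sub_self, integral_rpow (Or.inl hp),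
    zero_rpow (by linarith : p + 1 ≠ 0), sub_zero]

theorem intervalIntegrable_abs_sub_rpow (hsr : s ≤ r) (hrt : r ≤ t) :
    IntervalIntegrable (fun l => |r - l| ^ p) volume s t := by
  refine IntervalIntegrable.trans (b := r) ?_ ?_
  · refine (intervalIntegrable_const_sub_rpow hp r s r).congr fun l hl => ?_
    rw [uIoc_of_le hsr] at hl
    exact (abs_sub_rpow_eqOn_left hl.2).symm
  · refine (intervalIntegrable_sub_const_rpow hp r r t).congr fun l hl => ?_
    rw [uIoc_of_le hrt] at hl
    exact (abs_sub_rpow_eqOn_right hl.1.le).symm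

theorem integral_abs_sub_rpow_le (hsr : s ≤ r) (hrt : r ≤ t) :
    ∫ l in s..t, |r - l| ^ p ≤ 2 * ((t - s) ^ (p + 1) / (p + 1)) := by
  have hp1 : 0 < p + 1 := by linarith
  rw [← integral_add_adjacent_intervals (b := r) (intervalIntegrable_abs_sub_rpow hp hsr le_rfl)
      (intervalIntegrable_abs_sub_rpow hp le_rfl hrt),
    integral_congr (abs_sub_rpow_eqOn_left.mono (uIcc_of_le hsr ▸ Icc_subset_Iic_self)),
    integral_congr (abs_sub_rpow_eqOn_right.mono (uIcc_of_le hrt ▸ Icc_subset_Ici_self)),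
    integral_const_sub_rpow hp, integral_sub_const_rpow hp, two_mul]
  gcongr

end PowerIntegrals

noncomputable def volterraKernel (γ p τ r l : ℝ) : ℝ :=
  (τ - r) ^ (-γ) * (τ - l) ^ (-γ) * |r - l| ^ p

section Kernel

variable {γ p τ r l t : ℝ}

theorem volterraKernel_nonneg (hr : r ≤ τ) (hl : l ≤ τ) : 0 ≤ volterraKernel γ p τ r l :=
  mul_nonneg (mul_nonneg (rpow_nonneg (by linarith) _) (rpow_nonneg (by linarith) _))
    (rpow_nonneg (abs_nonneg _) _)

theorem volterraKernel_le_gap (hγ : 0 ≤ γ) (hr : r ≤ t) (hl : l ≤ t) (htτ : t < τ) :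
    volterraKernel γ p τ r l ≤ (τ - t) ^ (-(2 * γ)) * |r - l| ^ p := by
  have hτt : 0 < τ - t := by linarith
  have hr' : (τ - r) ^ (-γ) ≤ (τ - t) ^ (-γ) :=
    rpow_le_rpow_of_nonpos hτt (by linarith) (by linarith)
  have hl' : (τ - l) ^ (-γ) ≤ (τ - t) ^ (-γ) :=
    rpow_le_rpow_of_nonpos hτt (by linarith) (by linarith)
  calc volterraKernel γ p τ r l ≤ (τ - t) ^ (-γ) * (τ - t) ^ (-γ) * |r - l| ^ p :=
        mul_le_mul_of_nonneg_right (mul_le_mul hr' hl' (rpow_nonneg (by linarith) _)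
          (rpow_nonneg hτt.le _)) (rpow_nonneg (abs_nonneg _) _)
    _ = (τ - t) ^ (-(2 * γ)) * |r - l| ^ p := by rw [← rpow_add hτt, ← neg_add, ← two_mul]

theorem volterraKernel_le_gapless (hγ : 0 ≤ γ) (hp : p < 0) (hrt : r < t) (hlt : l < t)
    (htτ : t < τ) :
    volterraKernel γ p τ r l ≤
      2 ^ γ * (t - r) ^ (-γ) * |r - l| ^ (p - γ) +
        2 ^ (γ - p) * (t - r) ^ (p - γ) * (t - l) ^ (-γ) := by
  have hneg : -γ ≤ 0 := by linarith
  have merge : ∀ d : ℝ, 0 < d → d ^ (-γ) * d ^ p = d ^ (p - γ) := fun d hd => by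
    rw [← rpow_add hd, neg_add_eq_sub]
  have first_nonneg : 0 ≤ 2 ^ γ * (t - r) ^ (-γ) * |r - l| ^ (p - γ) := by
    have := rpow_nonneg (abs_nonneg (r - l)) (p - γ)
    have := rpow_nonneg (sub_nonneg.2 hrt.le) (-γ)
    positivity
  have second_nonneg : 0 ≤ 2 ^ (γ - p) * (t - r) ^ (p - γ) * (t - l) ^ (-γ) := by
    have := rpow_nonneg (sub_nonneg.2 hrt.le) (p - γ)
    have := rpow_nonneg (sub_nonneg.2 hlt.le) (-γ)
    positivity
  rcases lt_trichotomy l r with hlr | rfl | hrl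
  · have hd : 0 < r - l := sub_pos.2 hlr
    calc volterraKernel γ p τ r l ≤ (t - r) ^ (-γ) * (r - l) ^ (-γ) * (r - l) ^ p := by
          rw [volterraKernel, abs_of_pos hd]
          exact mul_le_mul_of_nonneg_right (mul_le_mul
            (rpow_le_rpow_of_nonpos (by linarith) (by linarith) hneg)
            (rpow_le_rpow_of_nonpos hd (by linarith) hneg)
            (rpow_nonneg (by linarith : 0 ≤ τ - l) _) (rpow_nonneg (by linarith : 0 ≤ t - r) _))
            (rpow_nonneg hd.le _)
      _ ≤ 2 ^ γ * (t - r) ^ (-γ) * |r - l| ^ (p - γ) := by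
          rw [mul_assoc, merge _ hd, abs_of_pos hd, mul_assoc]
          exact le_mul_of_one_le_left (mul_nonneg (rpow_nonneg (sub_nonneg.2 hrt.le) _)
            (rpow_nonneg hd.le _)) (one_le_rpow one_le_two hγ)
      _ ≤ _ := le_add_of_nonneg_right second_nonneg
  · have : volterraKernel γ p τ l l = 0 := by
      simp only [volterraKernel, sub_self, abs_zero, zero_rpow hp.ne, mul_zero]
    exact this ▸ add_nonneg first_nonneg second_nonneg
  · have hd : 0 < l - r := sub_pos.2 hrl
    have split := rpow_mul_rpow_le_of_nonpos (sub_nonneg.2 hlt.le) hd.le (by linarith) hneg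
      (by linarith : p - γ ≤ 0)
    rw [show t - l + (l - r) = t - r by ring, neg_neg, neg_sub] at split
    calc volterraKernel γ p τ r l ≤ (l - r) ^ (-γ) * (t - l) ^ (-γ) * (l - r) ^ p := by
          rw [volterraKernel, abs_sub_comm, abs_of_pos hd]
          exact mul_le_mul_of_nonneg_right (mul_le_mul
            (rpow_le_rpow_of_nonpos hd (by linarith) hneg)
            (rpow_le_rpow_of_nonpos (by linarith) (by linarith) hneg)
            (rpow_nonneg (by linarith : 0 ≤ τ - l) _) (rpow_nonneg hd.le _)) (rpow_nonneg hd.le _)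
      _ = (t - l) ^ (-γ) * (l - r) ^ (p - γ) := by
          rw [mul_comm ((l - r) ^ (-γ)), mul_assoc, merge _ hd]
      _ ≤ _ := by rwa [abs_sub_comm, abs_of_pos hd]


theorem integral_volterraKernel_le_gap (hγ : 0 ≤ γ) (hp : -1 < p) {s : ℝ} (hsr : s ≤ r)
    (hrt : r ≤ t) (htτ : t < τ) :
    ∫ l in s..t, volterraKernel γ p τ r l ≤
      (τ - t) ^ (-(2 * γ)) * (2 * ((t - s) ^ (p + 1) / (p + 1))) :=
  calc ∫ l in s..t, volterraKernel γ p τ r l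
      ≤ ∫ l in s..t, (τ - t) ^ (-(2 * γ)) * |r - l| ^ p :=
        integral_mono_of_nonneg_of_le_Ioo (hsr.trans hrt)
          ((intervalIntegrable_abs_sub_rpow hp hsr hrt).const_mul _)
          (fun l hl => volterraKernel_nonneg (by linarith) (by linarith [hl.2]))
          (fun l hl => volterraKernel_le_gap hγ hrt hl.2.le htτ)
    _ ≤ _ := by
        rw [intervalIntegral.integral_const_mul]
        exact mul_le_mul_of_nonneg_left (integral_abs_sub_rpow_le hp hsr hrt)
          (rpow_nonneg (by linarith) _)

theorem integral_integral_volterraKernel_le_gap (hγ : 0 ≤ γ) (hp : -1 < p) {s : ℝ} (hst : s < t)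
    (htτ : t < τ) :
    ∫ r in s..t, ∫ l in s..t, volterraKernel γ p τ r l ≤
      2 / (p + 1) * ((τ - t) ^ (-(2 * γ)) * (t - s) ^ (p + 2)) :=
  calc ∫ r in s..t, ∫ l in s..t, volterraKernel γ p τ r l
      ≤ ∫ r in s..t, (τ - t) ^ (-(2 * γ)) * (2 * ((t - s) ^ (p + 1) / (p + 1))) :=
        integral_mono_of_nonneg_of_le_Ioo hst.le intervalIntegrable_const
          (fun r hr => intervalIntegral.integral_nonneg hst.le fun l hl =>
            volterraKernel_nonneg (by linarith [hr.2]) (by linarith [hl.2]))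
          (fun r hr => integral_volterraKernel_le_gap hγ hp hr.1.le hr.2.le htτ)
    _ = _ := by
        rw [intervalIntegral.integral_const, smul_eq_mul, show p + 2 = p + 1 + 1 by ring,
          rpow_add_one (by linarith : t - s ≠ 0) (p + 1)]
        ring

theorem integral_volterraKernel_le_gapless (hγ : 0 ≤ γ) (hp : p < 0) (hpγ : -1 < p - γ) {s : ℝ}
    (hsr : s ≤ r) (hrt : r < t) (htτ : t < τ) :
    ∫ l in s..t, volterraKernel γ p τ r l ≤
      2 ^ γ * (2 * ((t - s) ^ (p - γ + 1) / (p - γ + 1))) * (t - r) ^ (-γ) +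
        2 ^ (γ - p) * ((t - s) ^ (-γ + 1) / (-γ + 1)) * (t - r) ^ (p - γ) := by
  have hi₁ := (intervalIntegrable_abs_sub_rpow hpγ hsr hrt.le).const_mul
    (2 ^ γ * (t - r) ^ (-γ))
  have hi₂ := (intervalIntegrable_const_sub_rpow (by linarith : -1 < -γ) t s t).const_mul
    (2 ^ (γ - p) * (t - r) ^ (p - γ))
  calc ∫ l in s..t, volterraKernel γ p τ r l
      ≤ ∫ l in s..t, (2 ^ γ * (t - r) ^ (-γ) * |r - l| ^ (p - γ) +
          2 ^ (γ - p) * (t - r) ^ (p - γ) * (t - l) ^ (-γ)) :=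
        integral_mono_of_nonneg_of_le_Ioo (hsr.trans hrt.le) (hi₁.add hi₂)
          (fun l hl => volterraKernel_nonneg (by linarith) (by linarith [hl.2]))
          (fun l hl => volterraKernel_le_gapless hγ hp hrt hl.2 htτ)
    _ = 2 ^ γ * (t - r) ^ (-γ) * (∫ l in s..t, |r - l| ^ (p - γ)) +
          2 ^ (γ - p) * (t - r) ^ (p - γ) * ((t - s) ^ (-γ + 1) / (-γ + 1)) := by
        rw [intervalIntegral.integral_add hi₁ hi₂, intervalIntegral.integral_const_mul,
          intervalIntegral.integral_const_mul, integral_const_sub_rpow (by linarith)]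
    _ ≤ 2 ^ γ * (t - r) ^ (-γ) * (2 * ((t - s) ^ (p - γ + 1) / (p - γ + 1))) +
          2 ^ (γ - p) * (t - r) ^ (p - γ) * ((t - s) ^ (-γ + 1) / (-γ + 1)) :=
        add_le_add_left (mul_le_mul_of_nonneg_left
          (integral_abs_sub_rpow_le hpγ hsr hrt.le)
          (mul_nonneg (by positivity) (rpow_nonneg (sub_nonneg.2 hrt.le) _))) _
    _ = _ := by ring

theorem integral_integral_volterraKernel_le_gapless (hγ : 0 ≤ γ) (hp : p < 0)
    (hpγ : -1 < p - γ) {s : ℝ} (hst : s < t) (htτ : t < τ) :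
    ∫ r in s..t, ∫ l in s..t, volterraKernel γ p τ r l ≤
      (2 * 2 ^ γ + 2 ^ (γ - p)) / ((p - γ + 1) * (1 - γ)) * (t - s) ^ (p - 2 * γ + 2) := by
  have hγ' : -1 < -γ := by linarith
  have hj₁ := (intervalIntegrable_const_sub_rpow hγ' t s t).const_mul
    (2 ^ γ * (2 * ((t - s) ^ (p - γ + 1) / (p - γ + 1))))
  have hj₂ := (intervalIntegrable_const_sub_rpow hpγ t s t).const_mul
    (2 ^ (γ - p) * ((t - s) ^ (-γ + 1) / (-γ + 1)))
  calc ∫ r in s..t, ∫ l in s..t, volterraKernel γ p τ r l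
      ≤ ∫ r in s..t, (2 ^ γ * (2 * ((t - s) ^ (p - γ + 1) / (p - γ + 1))) * (t - r) ^ (-γ) +
          2 ^ (γ - p) * ((t - s) ^ (-γ + 1) / (-γ + 1)) * (t - r) ^ (p - γ)) :=
        integral_mono_of_nonneg_of_le_Ioo hst.le (hj₁.add hj₂)
          (fun r hr => intervalIntegral.integral_nonneg hst.le fun l hl =>
            volterraKernel_nonneg (by linarith [hr.2]) (by linarith [hl.2]))
          (fun r hr => integral_volterraKernel_le_gapless hγ hp hpγ hr.1.le hr.2 htτ)
    _ = _ := by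
        rw [intervalIntegral.integral_add hj₁ hj₂, intervalIntegral.integral_const_mul,
          intervalIntegral.integral_const_mul, integral_const_sub_rpow hγ',
          integral_const_sub_rpow hpγ, show p - 2 * γ + 2 = p - γ + 1 + (-γ + 1) by ring,
          rpow_add (by linarith) (p - γ + 1) (-γ + 1)]
        field_simp
        ring

end Kernel

theorem stmt_9 (H γ : ℝ) (hH1 : 1/2 < H) (hH2 : H < 1) (hγ0 : 0 < γ) (hγH : γ < 2*H - 1) :
    ∃ C > 0, ∀ s t τ : ℝ, 0 ≤ s → s < t → t < τ →
      H * (2*H - 1) *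
        (∫ r in s..t, ∫ l in s..t, (τ - r) ^ (-γ) * (τ - l) ^ (-γ) * |r - l| ^ (2*H - 2))
      ≤ C * min ((τ - t) ^ (-(2*γ)) * (t - s) ^ (2*H)) ((t - s) ^ (2*H - 2*γ)) := by
  have hp : -1 < 2*H - 2 := by linarith
  have haH : 0 < H * (2*H - 1) := by nlinarith
  refine ⟨H * (2*H - 1) * max (2 / (2*H - 2 + 1))
      ((2 * 2 ^ γ + 2 ^ (γ - (2*H - 2))) / ((2*H - 2 - γ + 1) * (1 - γ))),
    mul_pos haH (lt_max_of_lt_left (div_pos two_pos (by linarith))), ?_⟩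
  intro s t τ _ hst htτ
  have gap := integral_integral_volterraKernel_le_gap (p := 2*H - 2) hγ0.le hp hst htτ
  have gapless := integral_integral_volterraKernel_le_gapless (p := 2*H - 2) hγ0.le (by linarith)
    (by linarith) hst htτ
  rw [show 2*H - 2 + 2 = 2*H by ring] at gap
  rw [show 2*H - 2 - 2*γ + 2 = 2*H - 2*γ by ring] at gapless
  refine (mul_le_mul_of_nonneg_left ?_ haH.le).trans_eq (mul_assoc _ _ _).symm
  exact le_max_mul_min
    (mul_nonneg (rpow_nonneg (sub_nonneg.2 htτ.le) _) (rpow_nonneg (sub_nonneg.2 hst.le) _))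
    (rpow_nonneg (sub_nonneg.2 hst.le) _) gap gapless
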